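/- F_{m,u,v,w} is contained in the support of differences between E_{m,i} and E_{m,j}, i.e., some element of F_{m,u,v,w} can be written as a−b with a ∈ E_{m,i}, b ∈ E_{m,j}, if and only if there exists 0 ≤ h ≤ m−u−v+w with i = u+h and j = v+h. -/
import Mathlib


open Finset

abbrev G4 : Type := ZMod 4 × ZMod 4

def L1 : Finset G4 := {(0,0),(0,1),(1,0)}

def L2 : Finset G4 := {(3,3)}

def N11 : Finset G4 := {(0,1),(0,3),(1,0),(3,0),(1,3),(3,1)}

def N12 : Finset G4 := {(1,1),(1,2),(2,1)}

def N21 : Finset G4 := {(3,3),(3,2),(2,3)}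

def N22 : Finset G4 := {(0,0)}

/-- The number of coordinates of `z` lying in `A`. -/
def cnt {m : ℕ} (A : Finset G4) (z : Fin m → G4) : ℕ :=
  (univ.filter fun i => z i ∈ A).card

/-- `E_{m,i}`: the union of all products of `i` copies of `L₁` and `m - i` copies of `L₂`. -/
def E (m i : ℕ) : Finset (Fin m → G4) :=
  univ.filter fun x => (∀ j, x j ∈ L1 ∪ L2) ∧ cnt L1 x = i

/-- `F_{m,a,b,c,d}`: tuples with exactly `a` coordinates in `N₁₁`, `b` in `N₁₂`,
`c` in `N₂₁` and `d` in `N₂₂`. -/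
def Fset (m a b c d : ℕ) : Finset (Fin m → G4) :=
  univ.filter fun z => (∀ j, z j ∈ N11 ∪ N12 ∪ N21 ∪ N22) ∧
    cnt N11 z = a ∧ cnt N12 z = b ∧ cnt N21 z = c ∧ cnt N22 z = d

/-! ### Auxiliary decidable facts -/

lemma cat11 : ∀ a ∈ L1 ∪ L2, ∀ b ∈ L1 ∪ L2, a - b ∈ N11 → a ∈ L1 ∧ b ∈ L1 := by decide
lemma cat12 : ∀ a ∈ L1 ∪ L2, ∀ b ∈ L1 ∪ L2, a - b ∈ N12 → a ∈ L1 ∧ b ∈ L2 := by decide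
lemma cat21 : ∀ a ∈ L1 ∪ L2, ∀ b ∈ L1 ∪ L2, a - b ∈ N21 → a ∈ L2 ∧ b ∈ L1 := by decide
lemma cat22 : ∀ a b : G4, a - b ∈ N22 → a = b := by decide

lemma hdisj1 : ∀ z ∈ N11, z ∉ N12 ∧ z ∉ N21 ∧ z ∉ N22 := by decide
lemma hdisj2 : ∀ z ∈ N12, z ∉ N11 ∧ z ∉ N21 ∧ z ∉ N22 := by decide
lemma hdisj3 : ∀ z ∈ N21, z ∉ N11 ∧ z ∉ N12 ∧ z ∉ N22 := by decide
lemma hdisj4 : ∀ z ∈ N22, z ∉ N11 ∧ z ∉ N12 ∧ z ∉ N21 := by decide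
lemma hdisjL1 : ∀ z ∈ L1, z ∉ L2 := by decide
lemma hdisjL2 : ∀ z ∈ L2, z ∉ L1 := by decide

lemma hex11 : ∀ z ∈ N11, ∃ a b : G4, a ∈ L1 ∧ b ∈ L1 ∧ a - b = z := by decide
lemma hex12 : ∀ z ∈ N12, ∃ a b : G4, a ∈ L1 ∧ b ∈ L2 ∧ a - b = z := by decide
lemma hex21 : ∀ z ∈ N21, ∃ a b : G4, a ∈ L2 ∧ b ∈ L1 ∧ a - b = z := by decide
lemma hex22L1 : ∀ z ∈ N22, ∃ a b : G4, a ∈ L1 ∧ b ∈ L1 ∧ a - b = z := by decide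
lemma hex22L2 : ∀ z ∈ N22, ∃ a b : G4, a ∈ L2 ∧ b ∈ L2 ∧ a - b = z := by decide

lemma mem4cases {z : G4} (hz : z ∈ N11 ∪ N12 ∪ N21 ∪ N22) :
    z ∈ N11 ∨ z ∈ N12 ∨ z ∈ N21 ∨ z ∈ N22 := by
  simp only [Finset.mem_union] at hz; tauto

lemma memL1uL2_left {z : G4} (h : z ∈ L1) : z ∈ L1 ∪ L2 := Finset.mem_union_left _ h
lemma memL1uL2_right {z : G4} (h : z ∈ L2) : z ∈ L1 ∪ L2 := Finset.mem_union_right _ h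

/-! ### Counting lemmas -/

lemma card_filter_Ico (m a b : ℕ) (hbm : b ≤ m) :
    ((univ : Finset (Fin m)).filter fun k : Fin m => a ≤ (k : ℕ) ∧ (k : ℕ) < b).card = b - a := by
  have hlt : ∀ n ∈ Finset.Ico a b, n < m := fun n hn => lt_of_lt_of_le (Finset.mem_Ico.1 hn).2 hbm
  have h1 : ((univ : Finset (Fin m)).filter fun k : Fin m => a ≤ (k : ℕ) ∧ (k : ℕ) < b)
      = (Finset.Ico a b).attachFin hlt := by
    ext k
    simp [Finset.mem_attachFin, Finset.mem_Ico]
  rw [h1, Finset.card_attachFin, Nat.card_Ico]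

lemma card_tri {m : ℕ} (p q r s : Fin m → Prop)
    [DecidablePred p] [DecidablePred q] [DecidablePred r] [DecidablePred s]
    (hpq : ∀ k, p k → ¬ q k) (hpr : ∀ k, p k → ¬ r k) (hqr : ∀ k, q k → ¬ r k)
    (hs : ∀ k, s k ↔ (p k ∨ q k ∨ r k)) :
    (univ.filter s).card = (univ.filter p).card + (univ.filter q).card + (univ.filter r).card := by
  have d1 : Disjoint (univ.filter p) (univ.filter q) := by
    rw [Finset.disjoint_left]
    intro k hk hk'
    exact hpq k (Finset.mem_filter.1 hk).2 (Finset.mem_filter.1 hk').2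
  have d2 : Disjoint (univ.filter p ∪ univ.filter q) (univ.filter r) := by
    rw [Finset.disjoint_left]
    intro k hk hk'
    rcases Finset.mem_union.1 hk with hk | hk
    · exact hpr k (Finset.mem_filter.1 hk).2 (Finset.mem_filter.1 hk').2
    · exact hqr k (Finset.mem_filter.1 hk).2 (Finset.mem_filter.1 hk').2
  have h1 : univ.filter s = (univ.filter p ∪ univ.filter q) ∪ univ.filter r := by
    ext k
    simp only [Finset.mem_filter, Finset.mem_union, Finset.mem_univ, true_and, hs k]
    tauto
  rw [h1, Finset.card_union_of_disjoint d2, Finset.card_union_of_disjoint d1]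

theorem stmt16 (m u v w i j : ℕ) (hwu : w ≤ u) (hwv : w ≤ v) (hum : u ≤ m) (hvm : v ≤ m)
    (huv : u + v ≤ m + w) :
    (∀ x ∈ Fset m w (u - w) (v - w) (m + w - u - v),
        ∃ a ∈ E m i, ∃ b ∈ E m j, a - b = x) ↔
    ∃ h ≤ m + w - u - v, i = u + h ∧ j = v + h := by
  constructor
  · -- forward direction
    intro hforall
    -- a concrete element of the F-set
    set x0 : Fin m → G4 := fun k =>
      if (k : ℕ) < w then (0,1) else if (k : ℕ) < u then (1,1)
      else if (k : ℕ) < u + (v - w) then (3,3) else (0,0) with hx0def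
    have e1 : ∀ k : Fin m, x0 k ∈ N11 ↔ (0 ≤ (k : ℕ) ∧ (k : ℕ) < w) := by
      intro k
      simp only [hx0def]
      split_ifs with c1 c2 c3
      · exact iff_of_true (by decide) (by omega)
      · exact iff_of_false (by decide) (by omega)
      · exact iff_of_false (by decide) (by omega)
      · exact iff_of_false (by decide) (by omega)
    have e2 : ∀ k : Fin m, x0 k ∈ N12 ↔ (w ≤ (k : ℕ) ∧ (k : ℕ) < u) := by
      intro k
      simp only [hx0def]
      split_ifs with c1 c2 c3
      · exact iff_of_false (by decide) (by omega)
      · exact iff_of_true (by decide) (by omega)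
      · exact iff_of_false (by decide) (by omega)
      · exact iff_of_false (by decide) (by omega)
    have e3 : ∀ k : Fin m, x0 k ∈ N21 ↔ (u ≤ (k : ℕ) ∧ (k : ℕ) < u + (v - w)) := by
      intro k
      simp only [hx0def]
      split_ifs with c1 c2 c3
      · exact iff_of_false (by decide) (by omega)
      · exact iff_of_false (by decide) (by omega)
      · exact iff_of_true (by decide) (by omega)
      · exact iff_of_false (by decide) (by omega)
    have e4 : ∀ k : Fin m, x0 k ∈ N22 ↔ (u + (v - w) ≤ (k : ℕ) ∧ (k : ℕ) < m) := by
      intro k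
      have hkm : (k : ℕ) < m := k.isLt
      simp only [hx0def]
      split_ifs with c1 c2 c3
      · exact iff_of_false (by decide) (by omega)
      · exact iff_of_false (by decide) (by omega)
      · exact iff_of_false (by decide) (by omega)
      · exact iff_of_true (by decide) (by omega)
    have hx0mem : x0 ∈ Fset m w (u - w) (v - w) (m + w - u - v) := by
      rw [Fset, Finset.mem_filter]
      refine ⟨Finset.mem_univ _, ?_, ?_, ?_, ?_, ?_⟩
      · intro k
        simp only [hx0def]
        split_ifs <;> decide
      · show (univ.filter fun k => x0 k ∈ N11).card = w
        rw [Finset.filter_congr (fun k _ => e1 k), card_filter_Ico m 0 w (by omega)]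
        omega
      · show (univ.filter fun k => x0 k ∈ N12).card = u - w
        rw [Finset.filter_congr (fun k _ => e2 k), card_filter_Ico m w u (by omega)]
      · show (univ.filter fun k => x0 k ∈ N21).card = v - w
        rw [Finset.filter_congr (fun k _ => e3 k), card_filter_Ico m u (u + (v - w)) (by omega)]
        omega
      · show (univ.filter fun k => x0 k ∈ N22).card = m + w - u - v
        rw [Finset.filter_congr (fun k _ => e4 k), card_filter_Ico m (u + (v - w)) m (le_refl m)]
        omega
    obtain ⟨a, haE, b, hbE, hab⟩ := hforall x0 hx0mem
    have hx0mem' := hx0mem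
    rw [Fset, Finset.mem_filter] at hx0mem'
    rw [E, Finset.mem_filter] at haE hbE
    obtain ⟨-, haL, hacnt⟩ := haE
    obtain ⟨-, hbL, hbcnt⟩ := hbE
    have hdx : ∀ k, a k - b k = x0 k := fun k => congrFun hab k
    have hxU : ∀ k, x0 k ∈ N11 ∪ N12 ∪ N21 ∪ N22 := by
      intro k
      exact hx0mem'.2.1 k
    set h := (univ.filter fun k => x0 k ∈ N22 ∧ a k ∈ L1).card with hhdef
    have hiffa : ∀ k, a k ∈ L1 ↔
        (x0 k ∈ N11 ∨ x0 k ∈ N12 ∨ (x0 k ∈ N22 ∧ a k ∈ L1)) := by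
      intro k
      constructor
      · intro hak
        rcases mem4cases (hxU k) with hz | hz | hz | hz
        · exact Or.inl hz
        · exact Or.inr (Or.inl hz)
        · exact absurd ((cat21 _ (haL k) _ (hbL k) (hdx k ▸ hz)).1)
            (fun h2 => hdisjL1 _ hak h2)
        · exact Or.inr (Or.inr ⟨hz, hak⟩)
      · rintro (hz | hz | ⟨-, hak⟩)
        · exact (cat11 _ (haL k) _ (hbL k) (hdx k ▸ hz)).1
        · exact (cat12 _ (haL k) _ (hbL k) (hdx k ▸ hz)).1
        · exact hak
    have hiffb : ∀ k, b k ∈ L1 ↔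
        (x0 k ∈ N11 ∨ x0 k ∈ N21 ∨ (x0 k ∈ N22 ∧ a k ∈ L1)) := by
      intro k
      constructor
      · intro hbk
        rcases mem4cases (hxU k) with hz | hz | hz | hz
        · exact Or.inl hz
        · exact absurd ((cat12 _ (haL k) _ (hbL k) (hdx k ▸ hz)).2)
            (fun h2 => hdisjL2 _ h2 hbk)
        · exact Or.inr (Or.inl hz)
        · have hab' : a k = b k := cat22 _ _ (hdx k ▸ hz)
          exact Or.inr (Or.inr ⟨hz, hab' ▸ hbk⟩)
      · rintro (hz | hz | ⟨hz, hak⟩)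
        · exact (cat11 _ (haL k) _ (hbL k) (hdx k ▸ hz)).2
        · exact (cat21 _ (haL k) _ (hbL k) (hdx k ▸ hz)).2
        · have hab' : a k = b k := cat22 _ _ (hdx k ▸ hz)
          exact hab' ▸ hak
    have hca : cnt L1 a = cnt N11 x0 + cnt N12 x0 + h := by
      exact card_tri _ _ _ _
        (fun k hp => (hdisj1 _ hp).1)
        (fun k hp hr => (hdisj1 _ hp).2.2 hr.1)
        (fun k hq hr => (hdisj2 _ hq).2.2 hr.1)
        hiffa
    have hcb : cnt L1 b = cnt N11 x0 + cnt N21 x0 + h := by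
      exact card_tri _ _ _ _
        (fun k hp => (hdisj1 _ hp).2.1)
        (fun k hp hr => (hdisj1 _ hp).2.2 hr.1)
        (fun k hq hr => (hdisj3 _ hq).2.2 hr.1)
        hiffb
    have hFm := hx0mem'.2
    obtain ⟨-, hc11, hc12, hc21, hc22⟩ := hFm
    have hhle : h ≤ m + w - u - v := by
      rw [hhdef, ← hc22]
      exact Finset.card_le_card (fun k hk => by
        rw [Finset.mem_filter] at hk ⊢
        exact ⟨hk.1, hk.2.1⟩)
    refine ⟨h, hhle, ?_, ?_⟩
    · rw [← hacnt, hca, hc11, hc12]; omega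
    · rw [← hbcnt, hcb, hc11, hc21]; omega
  · -- backward direction
    rintro ⟨h, hh, rfl, rfl⟩ x hxF
    rw [Fset, Finset.mem_filter] at hxF
    obtain ⟨-, hxU, hc11, hc12, hc21, hc22⟩ := hxF
    have hTcard : (univ.filter fun k => x k ∈ N22).card = m + w - u - v := hc22
    obtain ⟨S, hST, hScard⟩ :=
      Finset.exists_subset_card_eq (s := univ.filter fun k => x k ∈ N22) (n := h)
        (by rw [hTcard]; exact hh)
    have key : ∀ k : Fin m, ∃ p : G4 × G4, p.1 ∈ L1 ∪ L2 ∧ p.2 ∈ L1 ∪ L2 ∧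
        p.1 - p.2 = x k ∧
        (p.1 ∈ L1 ↔ (x k ∈ N11 ∨ x k ∈ N12 ∨ (x k ∈ N22 ∧ k ∈ S))) ∧
        (p.2 ∈ L1 ↔ (x k ∈ N11 ∨ x k ∈ N21 ∨ (x k ∈ N22 ∧ k ∈ S))) := by
      intro k
      rcases mem4cases (hxU k) with hz | hz | hz | hz
      · obtain ⟨a0, b0, ha0, hb0, hab0⟩ := hex11 _ hz
        exact ⟨(a0, b0), memL1uL2_left ha0, memL1uL2_left hb0, hab0,
          iff_of_true ha0 (Or.inl hz), iff_of_true hb0 (Or.inl hz)⟩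
      · obtain ⟨a0, b0, ha0, hb0, hab0⟩ := hex12 _ hz
        refine ⟨(a0, b0), memL1uL2_left ha0, memL1uL2_right hb0, hab0,
          iff_of_true ha0 (Or.inr (Or.inl hz)), iff_of_false (hdisjL2 _ hb0) ?_⟩
        rintro (h2 | h2 | ⟨h2, -⟩)
        · exact (hdisj2 _ hz).1 h2
        · exact (hdisj2 _ hz).2.1 h2
        · exact (hdisj2 _ hz).2.2 h2
      · obtain ⟨a0, b0, ha0, hb0, hab0⟩ := hex21 _ hz
        refine ⟨(a0, b0), memL1uL2_right ha0, memL1uL2_left hb0, hab0,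
          iff_of_false (hdisjL2 _ ha0) ?_, iff_of_true hb0 (Or.inr (Or.inl hz))⟩
        rintro (h2 | h2 | ⟨h2, -⟩)
        · exact (hdisj3 _ hz).1 h2
        · exact (hdisj3 _ hz).2.1 h2
        · exact (hdisj3 _ hz).2.2 h2
      · by_cases hk : k ∈ S
        · obtain ⟨a0, b0, ha0, hb0, hab0⟩ := hex22L1 _ hz
          exact ⟨(a0, b0), memL1uL2_left ha0, memL1uL2_left hb0, hab0,
            iff_of_true ha0 (Or.inr (Or.inr ⟨hz, hk⟩)),
            iff_of_true hb0 (Or.inr (Or.inr ⟨hz, hk⟩))⟩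
        · obtain ⟨a0, b0, ha0, hb0, hab0⟩ := hex22L2 _ hz
          refine ⟨(a0, b0), memL1uL2_right ha0, memL1uL2_right hb0, hab0,
            iff_of_false (hdisjL2 _ ha0) ?_, iff_of_false (hdisjL2 _ hb0) ?_⟩ <;>
          · rintro (h2 | h2 | ⟨-, h2⟩)
            · exact (hdisj4 _ hz).1 h2
            · first
              | exact (hdisj4 _ hz).2.1 h2
              | exact (hdisj4 _ hz).2.2 h2
            · exact hk h2
    choose p hp1 hp2 hp3 hp4 hp5 using key
    refine ⟨fun k => (p k).1, ?_, fun k => (p k).2, ?_, ?_⟩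
    · rw [E, Finset.mem_filter]
      refine ⟨Finset.mem_univ _, fun k => hp1 k, ?_⟩
      have hS' : (univ.filter fun k => x k ∈ N22 ∧ k ∈ S) = S := by
        ext k
        simp only [Finset.mem_filter, Finset.mem_univ, true_and]
        exact ⟨fun hk => hk.2, fun hk => ⟨(Finset.mem_filter.1 (hST hk)).2, hk⟩⟩
      have := card_tri (fun k => x k ∈ N11) (fun k => x k ∈ N12)
        (fun k => x k ∈ N22 ∧ k ∈ S) (fun k => (p k).1 ∈ L1)
        (fun k hp => (hdisj1 _ hp).1)
        (fun k hp hr => (hdisj1 _ hp).2.2 hr.1)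
        (fun k hq hr => (hdisj2 _ hq).2.2 hr.1)
        hp4
      show (univ.filter fun k => (p k).1 ∈ L1).card = u + h
      rw [this, hS', hScard]
      have : cnt N11 x = w := hc11
      have : cnt N12 x = u - w := hc12
      show cnt N11 x + cnt N12 x + h = u + h
      omega
    · rw [E, Finset.mem_filter]
      refine ⟨Finset.mem_univ _, fun k => hp2 k, ?_⟩
      have hS' : (univ.filter fun k => x k ∈ N22 ∧ k ∈ S) = S := by
        ext k
        simp only [Finset.mem_filter, Finset.mem_univ, true_and]
        exact ⟨fun hk => hk.2, fun hk => ⟨(Finset.mem_filter.1 (hST hk)).2, hk⟩⟩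
      have := card_tri (fun k => x k ∈ N11) (fun k => x k ∈ N21)
        (fun k => x k ∈ N22 ∧ k ∈ S) (fun k => (p k).2 ∈ L1)
        (fun k hp => (hdisj1 _ hp).2.1)
        (fun k hp hr => (hdisj1 _ hp).2.2 hr.1)
        (fun k hq hr => (hdisj3 _ hq).2.2 hr.1)
        hp5
      show (univ.filter fun k => (p k).2 ∈ L1).card = v + h
      rw [this, hS', hScard]
      show cnt N11 x + cnt N21 x + h = v + h
      rw [hc11, hc21]
      omega
    · funext k
      exact hp3 k
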